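/- Suppose a word-hyperbolic group G acts on a compact metrizable space Z as a non-elementary convergence group, i : ∂G → Z is a Cannon–Thurston map, and z ∈ i(∂G) with |i^{-1}(z)| > 1. Then every x ∈ i^{-1}(z) is asymptotic to L_i, and consequently z is not a conical limit point for the action of G on Z. -/

import Mathlib

open Filter Topology Metric Pointwise

/-- The maps `z ↦ g n • z` converge to the constant map with value `b`, uniformly on
compact subsets of `Z` avoiding the point `a` (i.e. locally uniformly on `Z \ {a}`). -/
def ConvLocUnif {G Z : Type*} [Group G] [MetricSpace Z] [MulAction G Z]
    (g : ℕ → G) (a b : Z) : Prop :=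
  ∀ K : Set Z, IsCompact K → a ∉ K →
    TendstoUniformlyOn (fun n z => g n • z) (fun _ => b) atTop K

/-- The action of `G` on the compact metrizable space `Z` is a convergence action: it is an
action by homeomorphisms such that every injective sequence in `G` has a subsequence
converging locally uniformly, away from one point `a`, to a constant map with value `b`. -/
def IsConvergenceAction (G Z : Type*) [Group G] [MetricSpace Z] [MulAction G Z] : Prop :=
  (∀ g : G, Continuous fun z : Z => g • z) ∧
  ∀ g : ℕ → G, Function.Injective g →
    ∃ (a b : Z) (φ : ℕ → ℕ), StrictMono φ ∧ ConvLocUnif (fun k => g (φ k)) a b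

/-- `g` is a conical sequence for `z` with pole pair `(zm, zp)`. -/
def IsConicalSeq {G Z : Type*} [Group G] [MetricSpace Z] [MulAction G Z]
    (g : ℕ → G) (z zm zp : Z) : Prop :=
  Function.Injective g ∧ zm ≠ zp ∧
    Tendsto (fun n => g n • z) atTop (𝓝 zp) ∧ ConvLocUnif g z zm

/-- `z` is a conical limit point for the action of `G` on `Z`. -/
def IsConicalLimitPoint (G : Type*) {Z : Type*} [Group G] [MetricSpace Z] [MulAction G Z]
    (z : Z) : Prop :=
  ∃ (g : ℕ → G) (zm zp : Z), IsConicalSeq g z zm zp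

/-- `g` is a conical sequence for `z` with pole pair `(zm, zp)`, for the restricted
action of `G` on an invariant subset `Z' ⊆ Z`. -/
def IsConicalSeqOn {G Z : Type*} [Group G] [MetricSpace Z] [MulAction G Z]
    (Z' : Set Z) (g : ℕ → G) (z zm zp : Z) : Prop :=
  zm ∈ Z' ∧ zp ∈ Z' ∧ Function.Injective g ∧ zm ≠ zp ∧
    Tendsto (fun n => g n • z) atTop (𝓝 zp) ∧
    ∀ K : Set Z, IsCompact K → K ⊆ Z' → z ∉ K →
      TendstoUniformlyOn (fun n w => g n • w) (fun _ => zm) atTop K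

/-- `z` is a conical limit point for the restricted action of `G` on `Z' ⊆ Z`. -/
def IsConicalLimitPointOn (G : Type*) {Z : Type*} [Group G] [MetricSpace Z] [MulAction G Z]
    (Z' : Set Z) (z : Z) : Prop :=
  ∃ (g : ℕ → G) (zm zp : Z), IsConicalSeqOn Z' g z zm zp

/-- The action of `G` on `Z` is elementary: `G` is finite or there is a nonempty invariant
subset of cardinality at most 2. -/
def IsElementaryAction (G Z : Type*) [Group G] [MetricSpace Z] [MulAction G Z] : Prop :=
  Finite G ∨ ∃ S : Set Z, S.Nonempty ∧ S.encard ≤ 2 ∧ ∀ g : G, g • S = S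

/-- A Cannon–Thurston map: a continuous `G`-equivariant map from the boundary `B = ∂G` to `Z`. -/
def IsCannonThurston (G : Type*) {B Z : Type*} [Group G] [MetricSpace B] [MulAction G B]
    [MetricSpace Z] [MulAction G Z] (i : B → Z) : Prop :=
  Continuous i ∧ ∀ (g : G) (x : B), i (g • x) = g • i x

/-- `B` is (a realization of) the Gromov boundary of the word-hyperbolic group `G`:
the action of `G` on `B` is a convergence action in which every point is conical
(a uniform convergence action), which by Bowditch's theorem characterizes
word-hyperbolic groups acting on their Gromov boundary. -/
def IsHypBoundary (G B : Type*) [Group G] [MetricSpace B] [CompactSpace B]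
    [MulAction G B] : Prop :=
  IsConvergenceAction G B ∧ ∀ x : B, IsConicalLimitPoint G x

/-- `g` acts loxodromically on `Z` with repelling point `am` and attracting point `ap`. -/
def IsLoxodromicOn {G Z : Type*} [Group G] [MetricSpace Z] [MulAction G Z]
    (g : G) (am ap : Z) : Prop :=
  ¬ IsOfFinOrder g ∧ am ≠ ap ∧ {z : Z | g • z = z} = {am, ap} ∧
    (∀ K : Set Z, IsCompact K → am ∉ K →
      TendstoUniformlyOn (fun (n : ℕ) z => g ^ n • z) (fun _ => ap) atTop K) ∧
    (∀ K : Set Z, IsCompact K → ap ∉ K →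
      TendstoUniformlyOn (fun (n : ℕ) z => g⁻¹ ^ n • z) (fun _ => am) atTop K)

/-- `g` acts parabolically on `Z`: it has infinite order and exactly one fixed point. -/
def IsParabolicOn {G : Type*} (Z : Type*) [Group G] [MetricSpace Z] [MulAction G Z]
    (g : G) : Prop :=
  ¬ IsOfFinOrder g ∧ ∃ a : Z, {z : Z | g • z = z} = {a}

/-- `x ∈ ∂G` is asymptotic to the lamination `L_i`: for every conical sequence for `x`
with pole pair `(xm, xp)` one has `i xm = i xp`. -/
def AsymptoticTo (G : Type*) {B Z : Type*} [Group G] [MetricSpace B] [MulAction G B]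
    [MetricSpace Z] [MulAction G Z] (i : B → Z) (x : B) : Prop :=
  ∀ (g : ℕ → G) (xm xp : B), IsConicalSeq g x xm xp → i xm = i xp

theorem ConvLocUnif.tendsto_smul {G Z : Type*} [Group G] [MetricSpace Z] [MulAction G Z]
    {g : ℕ → G} {a b : Z} (h : ConvLocUnif g a b) {z : Z} (hz : z ≠ a) :
    Tendsto (fun n => g n • z) atTop (𝓝 b) :=
  (h {z} isCompact_singleton (by simpa using hz.symm)).tendsto_at rfl

namespace IsCannonThurston

variable {G B Z : Type*} [Group G] [MetricSpace B] [MulAction G B] [MetricSpace Z]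
  [MulAction G Z] {i : B → Z}

theorem tendsto_smul_apply (hi : IsCannonThurston G i) {g : ℕ → G} {a b : B}
    (hg : ConvLocUnif g a b) {w : B} (hw : w ≠ a) :
    Tendsto (fun n => g n • i w) atTop (𝓝 (i b)) :=
  ((hi.1.tendsto b).comp (hg.tendsto_smul hw)).congr fun n => hi.2 (g n) w

theorem smul_range (hi : IsCannonThurston G i) (g : G) : g • Set.range i = Set.range i := by
  ext v
  simp only [Set.mem_smul_set, Set.mem_range]
  constructor
  · rintro ⟨_, ⟨u, rfl⟩, rfl⟩
    exact ⟨g • u, hi.2 g u⟩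
  · rintro ⟨u, rfl⟩
    exact ⟨i (g⁻¹ • u), ⟨g⁻¹ • u, rfl⟩, by rw [← hi.2, smul_inv_smul]⟩

/-- Otherwise the range of `i` would be an invariant set `⊆ {i a, z}`. -/
theorem exists_ne_and_apply_ne (hi : IsCannonThurston G i) (hZne : ¬ IsElementaryAction G Z)
    (a : B) (z : Z) : ∃ w : B, w ≠ a ∧ i w ≠ z := by
  by_contra! h
  have hsub : Set.range i ⊆ {i a, z} := by
    rintro _ ⟨w, rfl⟩
    by_cases hwa : w = a
    · exact Or.inl (by rw [hwa])
    · exact Or.inr (h w hwa)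
  have hcard : (Set.range i).encard ≤ 2 :=
    calc (Set.range i).encard ≤ ({i a, z} : Set Z).encard := Set.encard_mono hsub
      _ ≤ ({z} : Set Z).encard + 1 := Set.encard_insert_le _ _
      _ = 2 := by rw [Set.encard_singleton, one_add_one_eq_two]
  exact hZne (Or.inr ⟨Set.range i, Set.range_nonempty_iff_nonempty.mpr ⟨a⟩, hcard, hi.smul_range⟩)

/-- `g n` pushes the second point `y` of the fibre to the repelling pole `xm`, so
`g n • i x = i (g n • y)` tends both to `i xm` and to `i xp`. -/
theorem asymptoticTo (hi : IsCannonThurston G i) {x y : B} (hyx : y ≠ x) (hxy : i y = i x) :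
    AsymptoticTo G i x := by
  rintro g xm xp ⟨-, -, hxp, hxm⟩
  have hy : Tendsto (fun n => g n • i x) atTop (𝓝 (i xm)) := hxy ▸ hi.tendsto_smul_apply hxm hyx
  have hx : Tendsto (fun n => g n • i x) atTop (𝓝 (i xp)) :=
    ((hi.1.tendsto xp).comp hxp).congr fun n => hi.2 (g n) x
  exact tendsto_nhds_unique hy hx

/-- Pass to a subsequence `g ∘ φ` converging on `B` with poles `(a, b)`. Using a preimage
`p ≠ a` of `z`, the attracting pole `zp` of `z` is `i b`; using `w ≠ a` with `i w ≠ z`, the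
repelling pole `zm` is `i b` as well. -/
theorem not_isConicalLimitPoint (hi : IsCannonThurston G i) (hB : IsConvergenceAction G B)
    (hZne : ¬ IsElementaryAction G Z) {z : Z} (hmult : 1 < (i ⁻¹' {z}).encard) :
    ¬ IsConicalLimitPoint G z := by
  rintro ⟨g, zm, zp, hinj, hne, hzp, hzm⟩
  obtain ⟨a, b, φ, hφ, hconv⟩ := hB.2 g hinj
  obtain ⟨p, hp, hpa⟩ := Set.exists_ne_of_one_lt_encard hmult a
  obtain ⟨w, hwa, hwz⟩ := hi.exists_ne_and_apply_ne hZne a z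
  have hb : i b = zp := by
    have h := hi.tendsto_smul_apply hconv hpa
    rw [show i p = z from hp] at h
    exact tendsto_nhds_unique h (hzp.comp hφ.tendsto_atTop)
  have hw : Tendsto (fun k => g (φ k) • i w) atTop (𝓝 zm) :=
    (hzm.tendsto_smul hwz).comp hφ.tendsto_atTop
  exact hne (tendsto_nhds_unique hw (hb ▸ hi.tendsto_smul_apply hconv hwa))

end IsCannonThurston

theorem stmt7_general {G B Z : Type*} [Group G] [MetricSpace B] [CompactSpace B] [MulAction G B]
    [MetricSpace Z] [MulAction G Z]
    (hB : IsHypBoundary G B)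
    (hZne : ¬ IsElementaryAction G Z)
    (i : B → Z) (hi : IsCannonThurston G i)
    (z : Z) (hmult : 1 < (i ⁻¹' {z}).encard) :
    (∀ x : B, i x = z → AsymptoticTo G i x) ∧ ¬ IsConicalLimitPoint G z := by
  refine ⟨fun x hx => ?_, hi.not_isConicalLimitPoint hB.1 hZne hmult⟩
  obtain ⟨y, hy, hyx⟩ := Set.exists_ne_of_one_lt_encard hmult x
  exact hi.asymptoticTo hyx (hy.trans hx.symm)

/-- (Theorem A(2)) If `z ∈ i(∂G)` has more than one preimage under the
Cannon–Thurston map `i`, then every `x ∈ i⁻¹(z)` is asymptotic to `L_i`, and consequently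
`z` is not a conical limit point for the action of `G` on `Z`. -/
theorem stmt7 {G B Z : Type*} [Group G] [MetricSpace B] [CompactSpace B] [MulAction G B]
    [MetricSpace Z] [CompactSpace Z] [MulAction G Z]
    (hB : IsHypBoundary G B)
    (hZ : IsConvergenceAction G Z) (hZne : ¬ IsElementaryAction G Z)
    (i : B → Z) (hi : IsCannonThurston G i)
    (z : Z) (hmult : 1 < (i ⁻¹' {z}).encard) :
    (∀ x : B, i x = z → AsymptoticTo G i x) ∧ ¬ IsConicalLimitPoint G z :=
  stmt7_general hB hZne i hi z hmult
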